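/- General solution of the second-order Hamilton–Ehrenfest system: for any real C₃, C₄, C₅ the functions Δ₂₂(t)=C₃ sin 2Ωt + C₄ cos 2Ωt + C₅, Δ₁₂(t)=(1/μ)(ΩC₃−ρC₄)cos 2Ωt − (1/μ)(ΩC₄+ρC₃)sin 2Ωt − (ρ/μ)C₅, Δ₁₁(t)=(1/μ²)((ρ²−Ω²)C₃+2ρΩC₄)sin 2Ωt + (1/μ²)((ρ²−Ω²)C₄−2ρΩC₃)cos 2Ωt + (σ̃/μ)C₅ satisfy the system Δ̇₁₁ = −2ρΔ₁₁ − 2σ̃Δ₁₂, Δ̇₁₂ = μΔ₁₁ − σ̃Δ₂₂, Δ̇₂₂ = 2μΔ₁₂ + 2ρΔ₂₂; conversely, every differentiable solution of this system is of this form for suitable C₃, C₄, C₅. -/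

import Mathlib

noncomputable section

/-- `Δ₂₂(t) = C₃ sin 2Ωt + C₄ cos 2Ωt + C₅`. -/
def D22sol (Ω C₃ C₄ C₅ : ℝ) (t : ℝ) : ℝ :=
  C₃ * Real.sin (2 * Ω * t) + C₄ * Real.cos (2 * Ω * t) + C₅

/-- `Δ₁₂(t) = (1/μ)(ΩC₃−ρC₄)cos 2Ωt − (1/μ)(ΩC₄+ρC₃)sin 2Ωt − (ρ/μ)C₅`. -/
def D12sol (μ ρ Ω C₃ C₄ C₅ : ℝ) (t : ℝ) : ℝ :=
  (1 / μ) * (Ω * C₃ - ρ * C₄) * Real.cos (2 * Ω * t)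
    - (1 / μ) * (Ω * C₄ + ρ * C₃) * Real.sin (2 * Ω * t) - (ρ / μ) * C₅

/-- `Δ₁₁(t) = (1/μ²)((ρ²−Ω²)C₃+2ρΩC₄)sin 2Ωt + (1/μ²)((ρ²−Ω²)C₄−2ρΩC₃)cos 2Ωt + (σ̃/μ)C₅`. -/
def D11sol (μ ρ σt Ω C₃ C₄ C₅ : ℝ) (t : ℝ) : ℝ :=
  (1 / μ ^ 2) * ((ρ ^ 2 - Ω ^ 2) * C₃ + 2 * ρ * Ω * C₄) * Real.sin (2 * Ω * t)
    + (1 / μ ^ 2) * ((ρ ^ 2 - Ω ^ 2) * C₄ - 2 * ρ * Ω * C₃) * Real.cos (2 * Ω * t)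
    + (σt / μ) * C₅

/-
Both the explicit family and an arbitrary solution solve the same linear autonomous system
`x' = A x` on `ℝ³`. A linear vector field is Lipschitz, so by Grönwall two solutions that agree
at `t = 0` agree everywhere; and since `Ω ≠ 0`, every initial value at `t = 0` is attained by
the family for suitable `C₃, C₄, C₅`.
-/

open Real

theorem hasDerivAt_sin_cos_comb (A B C ω t : ℝ) :
    HasDerivAt (fun s => A * sin (ω * s) + B * cos (ω * s) + C)
      (ω * (A * cos (ω * t) - B * sin (ω * t))) t := by
  have hlin : HasDerivAt (fun s => ω * s) ω t := by simpa using (hasDerivAt_id t).const_mul ω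
  have hsin := ((hasDerivAt_sin _).comp t hlin).const_mul A
  have hcos := ((hasDerivAt_cos _).comp t hlin).const_mul B
  refine ((hsin.add hcos).add_const C).congr_deriv ?_
  ring

theorem eq_of_hasDerivAt_clm_apply {E : Type*} [NormedAddCommGroup E] [NormedSpace ℝ E]
    (L : E →L[ℝ] E) {f g : ℝ → E} (hf : ∀ t, HasDerivAt f (L (f t)) t)
    (hg : ∀ t, HasDerivAt g (L (g t)) t) {t₀ : ℝ} (h : f t₀ = g t₀) : f = g :=
  ODE_solution_unique_univ (v := fun _ => L) (s := fun _ => Set.univ)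
    (fun _ => L.lipschitz.lipschitzOnWith) (fun t => ⟨hf t, trivial⟩) (fun t => ⟨hg t, trivial⟩) h

section

variable {μ ρ σt Ω : ℝ}

theorem hasDerivAt_D22sol (hμ : μ ≠ 0) (C₃ C₄ C₅ t : ℝ) :
    HasDerivAt (D22sol Ω C₃ C₄ C₅)
      (2 * μ * D12sol μ ρ Ω C₃ C₄ C₅ t + 2 * ρ * D22sol Ω C₃ C₄ C₅ t) t := by
  refine (hasDerivAt_sin_cos_comb C₃ C₄ C₅ (2 * Ω) t).congr_deriv ?_
  simp only [D12sol, D22sol]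
  field_simp
  ring

theorem hasDerivAt_D12sol (hμ : μ ≠ 0) (hΩ : Ω ^ 2 = σt * μ - ρ ^ 2) (C₃ C₄ C₅ t : ℝ) :
    HasDerivAt (D12sol μ ρ Ω C₃ C₄ C₅)
      (μ * D11sol μ ρ σt Ω C₃ C₄ C₅ t - σt * D22sol Ω C₃ C₄ C₅ t) t := by
  have hform : D12sol μ ρ Ω C₃ C₄ C₅ = fun s =>
      -((Ω * C₄ + ρ * C₃) / μ) * sin (2 * Ω * s) + (Ω * C₃ - ρ * C₄) / μ * cos (2 * Ω * s)
        + -(ρ / μ * C₅) := by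
    funext s; simp only [D12sol]; ring
  rw [hform]
  refine (hasDerivAt_sin_cos_comb _ _ _ (2 * Ω) t).congr_deriv ?_
  obtain rfl : σt = (Ω ^ 2 + ρ ^ 2) / μ := by field_simp; linarith
  simp only [D11sol, D22sol]
  field_simp
  ring

theorem hasDerivAt_D11sol (hμ : μ ≠ 0) (hΩ : Ω ^ 2 = σt * μ - ρ ^ 2) (C₃ C₄ C₅ t : ℝ) :
    HasDerivAt (D11sol μ ρ σt Ω C₃ C₄ C₅)
      (-2 * ρ * D11sol μ ρ σt Ω C₃ C₄ C₅ t - 2 * σt * D12sol μ ρ Ω C₃ C₄ C₅ t) t := by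
  refine (hasDerivAt_sin_cos_comb _ _ _ (2 * Ω) t).congr_deriv ?_
  obtain rfl : σt = (Ω ^ 2 + ρ ^ 2) / μ := by field_simp; linarith
  simp only [D11sol, D12sol]
  field_simp
  ring

/- `C₅` comes from the first integral `μ Δ₁₁ + 2ρ Δ₁₂ + σ̃ Δ₂₂`, which equals `2Ω²C₅/μ` along the
family; then `C₄` and `C₃` are read off from `Δ₂₂(0)` and `Δ₁₂(0)`. -/
theorem exists_sol_eq_at_zero (hμ : μ ≠ 0) (hΩ₀ : Ω ≠ 0) (hΩ : Ω ^ 2 = σt * μ - ρ ^ 2)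
    (a b c : ℝ) : ∃ C₃ C₄ C₅ : ℝ,
      D11sol μ ρ σt Ω C₃ C₄ C₅ 0 = a ∧ D12sol μ ρ Ω C₃ C₄ C₅ 0 = b ∧
        D22sol Ω C₃ C₄ C₅ 0 = c := by
  set C₅ := μ * (μ * a + 2 * ρ * b + σt * c) / (2 * Ω ^ 2)
  refine ⟨(μ * b + ρ * c) / Ω, c - C₅, C₅, ?_, ?_, ?_⟩ <;>
    simp only [D11sol, D12sol, D22sol, mul_zero, sin_zero, cos_zero, C₅] <;>
    obtain rfl : σt = (Ω ^ 2 + ρ ^ 2) / μ := by field_simp; linarith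
  all_goals field_simp; ring

variable (μ ρ σt) in
def hesField : ℝ × ℝ × ℝ →L[ℝ] ℝ × ℝ × ℝ :=
  LinearMap.toContinuousLinearMap
    { toFun := fun x =>
        (-2 * ρ * x.1 - 2 * σt * x.2.1, μ * x.1 - σt * x.2.2, 2 * μ * x.2.1 + 2 * ρ * x.2.2)
      map_add' := fun x y => by simp only [Prod.fst_add, Prod.snd_add, Prod.mk_add_mk]; ring_nf
      map_smul' := fun c x => by
        simp only [Prod.smul_fst, Prod.smul_snd, smul_eq_mul, RingHom.id_apply, Prod.smul_mk]
        ring_nf }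

theorem hasDerivAt_prodMk_hesField {d11 d12 d22 : ℝ → ℝ} {t : ℝ}
    (h11 : HasDerivAt d11 (-2 * ρ * d11 t - 2 * σt * d12 t) t)
    (h12 : HasDerivAt d12 (μ * d11 t - σt * d22 t) t)
    (h22 : HasDerivAt d22 (2 * μ * d12 t + 2 * ρ * d22 t) t) :
    HasDerivAt (fun s => (d11 s, d12 s, d22 s)) (hesField μ ρ σt (d11 t, d12 t, d22 t)) t :=
  h11.prodMk (h12.prodMk h22)

end

/-- General solution of the second-order Hamilton–Ehrenfest system. -/
theorem second_order_HES_general_solution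
    (μ ρ σt Ω : ℝ) (hμ : μ ≠ 0) (hpos : 0 < σt * μ - ρ ^ 2)
    (hΩ : Ω = Real.sqrt (σt * μ - ρ ^ 2)) :
    (∀ C₃ C₄ C₅ : ℝ, ∀ t : ℝ,
      HasDerivAt (D11sol μ ρ σt Ω C₃ C₄ C₅)
        (-2 * ρ * D11sol μ ρ σt Ω C₃ C₄ C₅ t
          - 2 * σt * D12sol μ ρ Ω C₃ C₄ C₅ t) t ∧
      HasDerivAt (D12sol μ ρ Ω C₃ C₄ C₅)
        (μ * D11sol μ ρ σt Ω C₃ C₄ C₅ t - σt * D22sol Ω C₃ C₄ C₅ t) t ∧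
      HasDerivAt (D22sol Ω C₃ C₄ C₅)
        (2 * μ * D12sol μ ρ Ω C₃ C₄ C₅ t + 2 * ρ * D22sol Ω C₃ C₄ C₅ t) t)
    ∧
    (∀ d11 d12 d22 : ℝ → ℝ,
      (∀ t : ℝ, HasDerivAt d11 (-2 * ρ * d11 t - 2 * σt * d12 t) t) →
      (∀ t : ℝ, HasDerivAt d12 (μ * d11 t - σt * d22 t) t) →
      (∀ t : ℝ, HasDerivAt d22 (2 * μ * d12 t + 2 * ρ * d22 t) t) →
      ∃ C₃ C₄ C₅ : ℝ, ∀ t : ℝ,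
        d11 t = D11sol μ ρ σt Ω C₃ C₄ C₅ t ∧
        d12 t = D12sol μ ρ Ω C₃ C₄ C₅ t ∧
        d22 t = D22sol Ω C₃ C₄ C₅ t) := by
  have hΩsq : Ω ^ 2 = σt * μ - ρ ^ 2 := hΩ ▸ Real.sq_sqrt hpos.le
  have hΩ₀ : Ω ≠ 0 := hΩ ▸ (Real.sqrt_pos.2 hpos).ne'
  refine ⟨fun C₃ C₄ C₅ t => ⟨hasDerivAt_D11sol hμ hΩsq C₃ C₄ C₅ t,
    hasDerivAt_D12sol hμ hΩsq C₃ C₄ C₅ t, hasDerivAt_D22sol hμ C₃ C₄ C₅ t⟩,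
    fun d11 d12 d22 h11 h12 h22 => ?_⟩
  obtain ⟨C₃, C₄, C₅, h0⟩ := exists_sol_eq_at_zero hμ hΩ₀ hΩsq (d11 0) (d12 0) (d22 0)
  have hunique := eq_of_hasDerivAt_clm_apply (hesField μ ρ σt) (t₀ := 0)
    (fun t => hasDerivAt_prodMk_hesField (hasDerivAt_D11sol hμ hΩsq C₃ C₄ C₅ t)
      (hasDerivAt_D12sol hμ hΩsq C₃ C₄ C₅ t) (hasDerivAt_D22sol hμ C₃ C₄ C₅ t))
    (fun t => hasDerivAt_prodMk_hesField (h11 t) (h12 t) (h22 t)) (by simp only [h0])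
  exact ⟨C₃, C₄, C₅, fun t => by simpa [Prod.ext_iff, eq_comm] using congrFun hunique t⟩

end
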